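/- arXiv:1610.05637 — 7 statements merged into one kernel-verified Lean document; each statement's English description precedes it below -/
import Mathlib

section
/- Let 1<p<5, |d|<1, and y in the closed unit ball of \mathbb{R}^2 with 1+d\cdot y>0 (where d is a vector of norm <1). Then the function \kappa(d,y) = \kappa_0 (1-|d|^2)^{1/(p-1)} / (1+ d\cdot y)^{2/(p-1)}, with \kappa_0 = (2(p+1)/(p-1)^2)^{1/(p-1)}, satisfies the stationary equation \mathcal{L}\kappa - (2(p+1)/(p-1)^2)\kappa + \kappa^p = 0, where \mathcal{L}w = \rho^{-1}\,\mathrm{div}(\rho\nabla w - \rho (y\cdot\nabla w)y) and \rho(y) = (1-|y|^2)^{(5-p)/(2(p-1))}. -/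
/-! With `t = 1 + ⟪d, y⟫` and `β = 2 / (p - 1)` the profile is `κ = C t ^ (-β)`, so
`∇κ = -β C t ^ (-β - 1) d` and the flux `ρ (∇κ - ⟪y, ∇κ⟫ y)` is a scalar multiple of the field
`d - ⟪d, y⟫ y`, whose divergence in the plane is `-3 ⟪d, y⟫`. Together with
`∇ρ = -2α ρ y / (1 - ‖y‖²)` and `α = β - 1/2`, the divergence of the flux collapses to
`ρ β (β + 1) C (t ^ (-β) - (1 - ‖d‖²) t ^ (-β - 2))`. The first term is `λ κ` for
`λ = 2 (p + 1) / (p - 1)² = β (β + 1)`, and the second is `κ ^ p` because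
`C ^ (p - 1) = λ (1 - ‖d‖²)`. -/

open MeasureTheory

noncomputable def divg (F : EuclideanSpace ℝ (Fin 2) → EuclideanSpace ℝ (Fin 2))
    (y : EuclideanSpace ℝ (Fin 2)) : ℝ :=
  ∑ i : Fin 2, fderiv ℝ F y (EuclideanSpace.single i 1) i

open Real Filter Topology
open scoped RealInnerProductSpace

section RpowProfiles

variable {E : Type*} [NormedAddCommGroup E] [InnerProductSpace ℝ E]

theorem isOpen_setOf_one_add_inner_pos (d : E) : IsOpen {z : E | 0 < 1 + ⟪d, z⟫} :=
  isOpen_lt continuous_const (by fun_prop)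

theorem hasFDerivAt_one_add_inner_rpow {d y : E} (γ : ℝ) (hy : 0 < 1 + ⟪d, y⟫) :
    HasFDerivAt (fun z => (1 + ⟪d, z⟫) ^ γ) ((γ * (1 + ⟪d, y⟫) ^ (γ - 1)) • innerSL ℝ d) y :=
  (((innerSL ℝ d).hasFDerivAt).const_add 1).rpow_const (Or.inl hy.ne')

theorem hasGradientAt_mul_one_add_inner_rpow [CompleteSpace E] {d y : E} (C γ : ℝ)
    (hy : 0 < 1 + ⟪d, y⟫) :
    HasGradientAt (fun z => C * (1 + ⟪d, z⟫) ^ γ) ((γ * C * (1 + ⟪d, y⟫) ^ (γ - 1)) • d) y := by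
  rw [hasGradientAt_iff_hasFDerivAt, show γ * C * (1 + ⟪d, y⟫) ^ (γ - 1)
    = C * (γ * (1 + ⟪d, y⟫) ^ (γ - 1)) by ring, mul_smul, map_smul, map_smul]
  exact (hasFDerivAt_one_add_inner_rpow γ hy).const_mul C

theorem hasFDerivAt_one_sub_norm_sq_rpow {y : E} (α : ℝ) (hy : ‖y‖ < 1) :
    HasFDerivAt (fun z => (1 - ‖z‖ ^ 2) ^ α)
      ((-2 * α * (1 - ‖y‖ ^ 2) ^ (α - 1)) • innerSL ℝ y) y := by
  have hs : 1 - ‖y‖ ^ 2 ≠ 0 := by nlinarith [norm_nonneg y]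
  refine (((hasFDerivAt_id y).norm_sq.const_sub 1).rpow_const (p := α) (Or.inl hs)).congr_fderiv ?_
  ext v
  simp only [id_eq, ContinuousLinearMap.comp_id, smul_neg, neg_apply, smul_apply,
    innerSL_apply_apply, nsmul_eq_mul, smul_eq_mul]
  ring

end RpowProfiles

local notation "ℝ²" => EuclideanSpace ℝ (Fin 2)

theorem sum_apply_single_mul {ι : Type*} [Fintype ι] [DecidableEq ι]
    (a : EuclideanSpace ℝ ι →L[ℝ] ℝ) (u : EuclideanSpace ℝ ι) :
    ∑ i, a (EuclideanSpace.single i 1) * u i = a u := by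
  conv_rhs => rw [← (EuclideanSpace.basisFun ι ℝ).sum_repr u]
  simp [mul_comm]

theorem divg_congr {F G : ℝ² → ℝ²} {y : ℝ²} (h : F =ᶠ[𝓝 y] G) : divg F y = divg G y := by
  simp only [divg, h.fderiv_eq]

theorem divg_id (y : ℝ²) : divg (fun z => z) y = 2 := by
  simp [divg]

theorem divg_const_sub (c : ℝ²) (F : ℝ² → ℝ²) (y : ℝ²) :
    divg (fun z => c - F z) y = -divg F y := by
  simp [divg, fderiv_const_sub]

theorem divg_smul {a : ℝ² → ℝ} {a' : ℝ² →L[ℝ] ℝ} {V : ℝ² → ℝ²} {y : ℝ²}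
    (ha : HasFDerivAt a a' y) (hV : DifferentiableAt ℝ V y) :
    divg (fun z => a z • V z) y = a' (V y) + a y * divg V y := by
  have hF : HasFDerivAt (fun z => a z • V z) (a y • fderiv ℝ V y + a'.smulRight (V y)) y :=
    ha.smul hV.hasFDerivAt
  rw [divg, hF.fderiv, divg, Finset.mul_sum, ← sum_apply_single_mul a' (V y),
    ← Finset.sum_add_distrib]
  simp [add_comm]

theorem divg_sub_inner_smul (d y : ℝ²) : divg (fun z => d - ⟪d, z⟫ • z) y = -3 * ⟪d, y⟫ := by
  rw [divg_const_sub, divg_smul (a := fun z => ⟪d, z⟫) (V := fun z => z)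
    (innerSL ℝ d).hasFDerivAt differentiableAt_fun_id, divg_id, innerSL_apply_apply]
  ring

/-- `𝓛 w = ρ⁻¹ * divg (weightedFlux ρ w)`. -/
noncomputable def weightedFlux (ρ w : ℝ² → ℝ) (z : ℝ²) : ℝ² :=
  ρ z • gradient w z - (ρ z * ⟪z, gradient w z⟫) • z

theorem weightedFlux_congr {ρ w w' : ℝ² → ℝ} {y : ℝ²} (h : w =ᶠ[𝓝 y] w') :
    weightedFlux ρ w =ᶠ[𝓝 y] weightedFlux ρ w' := by
  filter_upwards [h.eventuallyEq_nhds] with z hz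
  simp only [weightedFlux, hz.gradient_eq]

theorem weightedFlux_of_gradient_eq_smul {ρ w : ℝ² → ℝ} {d z : ℝ²} {c : ℝ}
    (h : gradient w z = c • d) : weightedFlux ρ w z = (ρ z * c) • (d - ⟪d, z⟫ • z) := by
  rw [weightedFlux, h, inner_smul_right, real_inner_comm, smul_sub, smul_smul, smul_smul, mul_assoc]

theorem divg_weightedFlux_profile {α β C : ℝ} {d y : ℝ²} (hy : ‖y‖ < 1)
    (ht : 0 < 1 + ⟪d, y⟫) :
    divg (weightedFlux (fun z => (1 - ‖z‖ ^ 2) ^ α) (fun z => C * (1 + ⟪d, z⟫) ^ (-β))) y =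
      β * C * (1 - ‖y‖ ^ 2) ^ α * (1 + ⟪d, y⟫) ^ (-β - 2) *
        ((β + 1) * (‖d‖ ^ 2 - ⟪d, y⟫ ^ 2) + (2 * α + 3) * ⟪d, y⟫ * (1 + ⟪d, y⟫)) := by
  have hflux : weightedFlux (fun z => (1 - ‖z‖ ^ 2) ^ α) (fun z => C * (1 + ⟪d, z⟫) ^ (-β))
      =ᶠ[𝓝 y] fun z => ((1 - ‖z‖ ^ 2) ^ α * (-β * C * (1 + ⟪d, z⟫) ^ (-β - 1))) •
        (d - ⟪d, z⟫ • z) := by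
    filter_upwards [(isOpen_setOf_one_add_inner_pos d).mem_nhds ht] with z hz
    exact weightedFlux_of_gradient_eq_smul (hasGradientAt_mul_one_add_inner_rpow C (-β) hz).gradient
  have hρ := hasFDerivAt_one_sub_norm_sq_rpow α hy
  have hg := (hasFDerivAt_one_add_inner_rpow (-β - 1) ht).const_mul (-β * C)
  have hproj : DifferentiableAt ℝ (fun z : ℝ² => d - ⟪d, z⟫ • z) y :=
    (differentiableAt_const d).sub ((innerSL ℝ d).differentiableAt.smul differentiableAt_fun_id)
  rw [divg_congr hflux, divg_smul (hρ.fun_mul hg) hproj, divg_sub_inner_smul]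
  have hs : 1 - ‖y‖ ^ 2 ≠ 0 := by nlinarith [norm_nonneg y]
  rw [rpow_sub_one hs, show -β - 1 - 1 = -β - 2 by ring, show -β - 1 = -β - 2 + 1 by ring,
    rpow_add_one ht.ne']
  simp only [add_apply, smul_apply, innerSL_apply_apply,
    inner_sub_right, inner_smul_right, real_inner_self_eq_norm_sq, real_inner_comm d y, smul_eq_mul]
  field_simp
  ring

theorem rpow_mul_rpow_neg_rpow {p c t : ℝ} (hp : 1 < p) (hc : 0 ≤ c) (ht : 0 < t) :
    (c ^ (1 / (p - 1)) * t ^ (-(2 / (p - 1)))) ^ p =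
      c * c ^ (1 / (p - 1)) * t ^ (-(2 / (p - 1)) - 2) := by
  have hp' : p - 1 ≠ 0 := sub_ne_zero.mpr hp.ne'
  rw [mul_rpow (rpow_nonneg hc _) (rpow_nonneg ht.le _), ← rpow_mul hc, ← rpow_mul ht.le,
    show 1 / (p - 1) * p = 1 + 1 / (p - 1) by field_simp; ring, rpow_add' hc (by positivity),
    rpow_one, show -(2 / (p - 1)) * p = -(2 / (p - 1)) - 2 by field_simp; ring, mul_assoc]

theorem stmt_2_general (p : ℝ) (hp1 : 1 < p)
    (d : EuclideanSpace ℝ (Fin 2)) (hd : ‖d‖ < 1)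
    (α : ℝ) (hα : α = (5 - p) / (2 * (p - 1)))
    (ρ : EuclideanSpace ℝ (Fin 2) → ℝ)
    (hρ : ∀ y, ρ y = (1 - ‖y‖ ^ 2) ^ α)
    (κ₀ : ℝ) (hκ₀ : κ₀ = (2 * (p + 1) / (p - 1) ^ 2) ^ (1 / (p - 1)))
    (κ : EuclideanSpace ℝ (Fin 2) → ℝ)
    (hκ : ∀ y, κ y = κ₀ * (1 - ‖d‖ ^ 2) ^ (1 / (p - 1)) / (1 + (inner ℝ d y : ℝ)) ^ (2 / (p - 1))) :
    ∀ y ∈ Metric.ball (0 : EuclideanSpace ℝ (Fin 2)) 1, 0 < 1 + (inner ℝ d y : ℝ) →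
      (ρ y)⁻¹ *
          divg (fun z => ρ z • gradient κ z - (ρ z * (inner ℝ z (gradient κ z) : ℝ)) • z) y
        - (2 * (p + 1) / (p - 1) ^ 2) * κ y + (κ y) ^ p = 0 := by
  intro y hy ht
  have hp : p - 1 ≠ 0 := sub_ne_zero.mpr hp1.ne'
  have hμ : 0 < 2 * (p + 1) / (p - 1) ^ 2 := by positivity
  have hd' : 0 ≤ 1 - ‖d‖ ^ 2 := by nlinarith [norm_nonneg d]
  set C := (2 * (p + 1) / (p - 1) ^ 2 * (1 - ‖d‖ ^ 2)) ^ (1 / (p - 1)) with hC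
  have hκ_near : κ =ᶠ[𝓝 y] fun z => C * (1 + ⟪d, z⟫) ^ (-(2 / (p - 1))) := by
    filter_upwards [(isOpen_setOf_one_add_inner_pos d).mem_nhds ht] with z hz
    rw [hκ z, rpow_neg hz.le, hκ₀, ← mul_rpow hμ.le hd', div_eq_mul_inv]
  change (ρ y)⁻¹ * divg (weightedFlux ρ κ) y - _ + _ = 0
  have hy' : ‖y‖ < 1 := mem_ball_zero_iff.mp hy
  rw [divg_congr (weightedFlux_congr hκ_near), funext hρ, divg_weightedFlux_profile hy' ht,
    hκ_near.eq_of_nhds, rpow_mul_rpow_neg_rpow hp1 (mul_nonneg hμ.le hd') ht, ← hC]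
  have hs : (1 - ‖y‖ ^ 2) ^ α ≠ 0 := (rpow_pos_of_pos (by nlinarith [norm_nonneg y]) _).ne'
  beta_reduce
  rw [rpow_sub ht, rpow_two]
  subst hα
  field_simp
  ring

theorem stmt_2 (p : ℝ) (hp1 : 1 < p) (hp2 : p < 5)
    (d : EuclideanSpace ℝ (Fin 2)) (hd : ‖d‖ < 1)
    (α : ℝ) (hα : α = (5 - p) / (2 * (p - 1)))
    (ρ : EuclideanSpace ℝ (Fin 2) → ℝ)
    (hρ : ∀ y, ρ y = (1 - ‖y‖ ^ 2) ^ α)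
    (κ₀ : ℝ) (hκ₀ : κ₀ = (2 * (p + 1) / (p - 1) ^ 2) ^ (1 / (p - 1)))
    (κ : EuclideanSpace ℝ (Fin 2) → ℝ)
    (hκ : ∀ y, κ y = κ₀ * (1 - ‖d‖ ^ 2) ^ (1 / (p - 1)) / (1 + (inner ℝ d y : ℝ)) ^ (2 / (p - 1))) :
    ∀ y ∈ Metric.ball (0 : EuclideanSpace ℝ (Fin 2)) 1, 0 < 1 + (inner ℝ d y : ℝ) →
      (ρ y)⁻¹ *
          divg (fun z => ρ z • gradient κ z - (ρ z * (inner ℝ z (gradient κ z) : ℝ)) • z) y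
        - (2 * (p + 1) / (p - 1) ^ 2) * κ y + (κ y) ^ p = 0 :=
  stmt_2_general p hp1 d hd α hα ρ hρ κ₀ hκ₀ κ hκ
end

section
/- Let p>1, d\in(-1,1), \nu>-1+|d|, and define \mu = 1/(1+\nu/(1-|d|)) and \lambda^{p-1} = (1-d^2)/((1+\nu)^2 - d^2). Then \min(\mu,\mu^2) \le \lambda^{p-1} \le \max(\mu,\mu^2). -/
/-!
Write `a = |d|`. Since `(1 + ν)² - d² = (1 - a + ν)(1 + a + ν)` and `1 - d² = (1 - a)(1 + a)`,
`λ^{p-1} = μ · r` with `μ = (1 - a)/(1 - a + ν)` and `r = (1 + a)/(1 + a + ν)`. As `t ↦ t/(t + ν)` is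
monotone (increasing for `ν ≥ 0`, decreasing for `ν ≤ 0`) and tends to `1`, `r` lies between
`μ` and `1`, so `μ · r` lies between `μ²` and `μ`.
-/

open Set

lemma div_add_mem_uIcc_one {s t ν : ℝ} (hst : s ≤ t) (hsν : 0 < s + ν) :
    t / (t + ν) ∈ uIcc (s / (s + ν)) 1 := by
  have htν : 0 < t + ν := by linarith
  rcases le_total 0 ν with hν | hν
  · rw [uIcc_of_le ((div_le_one hsν).2 (by linarith))]
    refine ⟨?_, (div_le_one htν).2 (by linarith)⟩
    rw [div_le_div_iff₀ hsν htν]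
    nlinarith
  · rw [uIcc_of_ge ((one_le_div hsν).2 (by linarith))]
    refine ⟨(one_le_div htν).2 (by linarith), ?_⟩
    rw [div_le_div_iff₀ htν hsν]
    nlinarith

lemma inv_one_add_div_eq {a ν : ℝ} (ha : a ≠ 0) : (1 + ν / a)⁻¹ = a / (a + ν) := by
  rw [one_add_div ha, inv_div]

lemma one_sub_sq_div_eq_mul (a ν : ℝ) :
    (1 - a ^ 2) / ((1 + ν) ^ 2 - a ^ 2) = (1 - a) / (1 - a + ν) * ((1 + a) / (1 + a + ν)) := by
  rw [div_mul_div_comm]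
  congr 1 <;> ring

theorem stmt_3 (p d ν : ℝ) (hp : 1 < p) (hd : |d| < 1) (hν : -1 + |d| < ν)
    (μ lam : ℝ) (hμ : μ = (1 + ν / (1 - |d|))⁻¹)
    (hlam : lam = ((1 - d ^ 2) / ((1 + ν) ^ 2 - d ^ 2)) ^ (1 / (p - 1))) :
    min μ (μ ^ 2) ≤ lam ^ (p - 1) ∧ lam ^ (p - 1) ≤ max μ (μ ^ 2) := by
  have hA : 0 < 1 - |d| := by linarith
  have hμ' : μ = (1 - |d|) / (1 - |d| + ν) := hμ.trans (inv_one_add_div_eq hA.ne')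
  have hfactor : (1 - d ^ 2) / ((1 + ν) ^ 2 - d ^ 2) = μ * ((1 + |d|) / (1 + |d| + ν)) := by
    rw [← sq_abs d, one_sub_sq_div_eq_mul, hμ']
  have hlam_pow : lam ^ (p - 1) = μ * ((1 + |d|) / (1 + |d| + ν)) := by
    have hμ_nonneg : 0 ≤ μ := hμ' ▸ div_nonneg hA.le (by linarith)
    have hr_nonneg : 0 ≤ (1 + |d|) / (1 + |d| + ν) :=
      div_nonneg (by positivity) (by linarith [abs_nonneg d])
    rw [hlam, hfactor, one_div]
    exact Real.rpow_inv_rpow (mul_nonneg hμ_nonneg hr_nonneg) (by linarith)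
  have hr : (1 + |d|) / (1 + |d| + ν) ∈ uIcc μ 1 :=
    hμ' ▸ div_add_mem_uIcc_one (by linarith [abs_nonneg d]) (by linarith)
  have hmem : lam ^ (p - 1) ∈ uIcc (μ * μ) (μ * 1) :=
    hlam_pow ▸ image_const_mul_uIcc μ μ 1 ▸ mem_image_of_mem (μ * ·) hr
  rw [mul_one, ← sq] at hmem
  rwa [uIcc_comm] at hmem
end

section
/- Let \gamma > -1 and \beta \in \mathbb{R} with \gamma+1-\beta<0, and let I(\delta) = \int_{-1}^{1} (1-\xi^2)^{\gamma}(1+\delta\xi)^{-\beta}\,d\xi for \delta\in(-1,1). Then there exists a constant K>0 (depending on \gamma,\beta) such that I(\delta)\,(1-|\delta|)^{\beta-(\gamma+1)} \to K as |\delta|\to 1. -/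
/-!
On [-1, 0] substitute ξ = (1 - δ) u - 1: since 1 - ξ² = (1 - δ) u (2 - (1 - δ) u) and
1 + δ ξ = (1 - δ) (1 + δ u), the piece over [-1, 0] times (1 - δ) ^ (β - (γ + 1)) becomes
∫ over (0, 1 / (1 - δ)] of u ^ γ (2 - (1 - δ) u) ^ γ (1 + δ u) ^ (-β). For δ > 1/2 this integrand
is dominated by a multiple of u ^ γ (1 + u) ^ (-β), integrable on (0, ∞) because γ > -1 and
γ + 1 < β, so dominated convergence gives the limit K = 2 ^ γ ∫₀^∞ u ^ γ (1 + u) ^ (-β) du > 0 as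
δ → 1⁻. The piece over [0, 1] stays bounded, so it is killed by the factor (1 - δ) ^ (β - (γ + 1)).
Finally I is even, so δ → -1⁺ behaves the same way.
-/

open MeasureTheory Set Filter Topology

namespace EndpointAsymptotics

lemma rpow_le_two_rpow_abs (γ : ℝ) {x : ℝ} (h1 : 1 ≤ x) (h2 : x ≤ 2) : x ^ γ ≤ 2 ^ |γ| :=
  (Real.rpow_le_rpow_of_exponent_le h1 (le_abs_self γ)).trans
    (Real.rpow_le_rpow (by linarith) h2 (abs_nonneg γ))

lemma one_sub_sq_rpow_le {γ ξ : ℝ} (hξ : ξ ∈ Icc (-1 : ℝ) 1) :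
    (1 - ξ ^ 2) ^ γ ≤ 2 ^ |γ| * ((1 - ξ) ^ γ + (1 + ξ) ^ γ) := by
  obtain ⟨h1, h2⟩ := hξ
  have hm : 0 ≤ 1 - ξ := by linarith
  have hp : 0 ≤ 1 + ξ := by linarith
  have h2pos : (0 : ℝ) ≤ 2 ^ |γ| := by positivity
  rw [show 1 - ξ ^ 2 = (1 - ξ) * (1 + ξ) by ring, Real.mul_rpow hm hp]
  have := Real.rpow_nonneg hm γ
  have := Real.rpow_nonneg hp γ
  rcases le_total 0 ξ with h | h
  · nlinarith [rpow_le_two_rpow_abs γ (x := 1 + ξ) (by linarith) (by linarith)]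
  · nlinarith [rpow_le_two_rpow_abs γ (x := 1 - ξ) (by linarith) (by linarith)]

lemma intervalIntegrable_one_sub_sq_rpow {γ : ℝ} (hγ : -1 < γ) :
    IntervalIntegrable (fun ξ : ℝ => (1 - ξ ^ 2) ^ γ) volume (-1) 1 := by
  have hpow := intervalIntegral.intervalIntegrable_rpow' (a := 0) (b := 2) hγ
  have hm : IntervalIntegrable (fun ξ : ℝ => (1 - ξ) ^ γ) volume (-1) 1 := by
    have := (hpow.comp_sub_left 1).symm
    norm_num at this
    exact this
  have hp : IntervalIntegrable (fun ξ : ℝ => (1 + ξ) ^ γ) volume (-1) 1 := by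
    have := hpow.comp_add_left 1
    norm_num at this
    exact this
  refine ((hm.add hp).const_mul (2 ^ |γ|)).mono_fun'
    (by fun_prop : Measurable _).aestronglyMeasurable ?_
  rw [uIoc_of_le (by norm_num)]
  filter_upwards [ae_restrict_mem measurableSet_Ioc] with ξ ⟨h1, h2⟩
  rw [Real.norm_of_nonneg (Real.rpow_nonneg (by nlinarith) _)]
  exact one_sub_sq_rpow_le ⟨h1.le, h2⟩

variable {γ β : ℝ}

noncomputable def integrand (γ β δ ξ : ℝ) : ℝ := (1 - ξ ^ 2) ^ γ * (1 + δ * ξ) ^ (-β)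

lemma integral_integrand_neg (γ β δ : ℝ) :
    ∫ ξ in (-1 : ℝ)..1, integrand γ β (-δ) ξ = ∫ ξ in (-1 : ℝ)..1, integrand γ β δ ξ := by
  have h : ∀ ξ, integrand γ β (-δ) ξ = integrand γ β δ (-ξ) := by simp [integrand]
  simp_rw [h, intervalIntegral.integral_comp_neg, neg_neg]

lemma integrand_nonneg {δ ξ : ℝ} (hδ : |δ| ≤ 1) (hξ : ξ ∈ Icc (-1 : ℝ) 1) :
    0 ≤ integrand γ β δ ξ := by
  have hδξ : |δ * ξ| ≤ 1 := by
    rw [abs_mul]; exact mul_le_one₀ hδ (abs_nonneg ξ) (abs_le.mpr hξ)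
  unfold integrand
  have := Real.rpow_nonneg (show 0 ≤ 1 - ξ ^ 2 by nlinarith [hξ.1, hξ.2]) γ
  have := Real.rpow_nonneg (show 0 ≤ 1 + δ * ξ by linarith [(abs_le.mp hδξ).1]) (-β)
  positivity

lemma integrand_le (hβ : 0 ≤ β) {δ ξ : ℝ} (hδ : |δ| < 1) (hξ : ξ ∈ Icc (-1 : ℝ) 1) :
    integrand γ β δ ξ ≤ (1 - |δ|) ^ (-β) * (1 - ξ ^ 2) ^ γ := by
  have hδξ : |δ * ξ| ≤ |δ| := by
    rw [abs_mul]; exact mul_le_of_le_one_right (abs_nonneg δ) (abs_le.mpr hξ)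
  have hbase : (1 + δ * ξ) ^ (-β) ≤ (1 - |δ|) ^ (-β) :=
    Real.rpow_le_rpow_of_nonpos (by linarith) (by linarith [(abs_le.mp hδξ).1]) (by linarith)
  rw [integrand, mul_comm]
  exact mul_le_mul_of_nonneg_right hbase
    (Real.rpow_nonneg (by nlinarith [hξ.1, hξ.2]) γ)

lemma integrand_le_of_nonneg (hβ : 0 ≤ β) {δ ξ : ℝ} (hδ : 0 ≤ δ) (hξ : ξ ∈ Icc (0 : ℝ) 1) :
    integrand γ β δ ξ ≤ (1 - ξ ^ 2) ^ γ := by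
  have hbase : (1 + δ * ξ) ^ (-β) ≤ 1 :=
    Real.rpow_le_one_of_one_le_of_nonpos (by nlinarith [hξ.1]) (by linarith)
  exact mul_le_of_le_one_right (Real.rpow_nonneg (by nlinarith [hξ.1, hξ.2]) γ) hbase

lemma intervalIntegrable_integrand (hγ : -1 < γ) (hβ : 0 ≤ β) {δ : ℝ} (hδ : |δ| < 1) :
    IntervalIntegrable (integrand γ β δ) volume (-1) 1 := by
  refine ((intervalIntegrable_one_sub_sq_rpow hγ).const_mul ((1 - |δ|) ^ (-β))).mono_fun'
    (by unfold integrand; fun_prop : Measurable _).aestronglyMeasurable ?_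
  rw [uIoc_of_le (by norm_num)]
  filter_upwards [ae_restrict_mem measurableSet_Ioc] with ξ ⟨h1, h2⟩
  rw [Real.norm_of_nonneg (integrand_nonneg hδ.le ⟨h1.le, h2⟩)]
  exact integrand_le hβ hδ ⟨h1.le, h2⟩

noncomputable def rescaledIntegrand (γ β δ u : ℝ) : ℝ :=
  u ^ γ * (2 - (1 - δ) * u) ^ γ * (1 + δ * u) ^ (-β)

lemma integrand_mul_add_neg_one {δ u : ℝ} (hδ0 : 0 ≤ δ) (hδ1 : δ < 1) (hu : 0 ≤ u)
    (hu2 : (1 - δ) * u ≤ 2) :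
    integrand γ β δ ((1 - δ) * u + -1) = (1 - δ) ^ (γ - β) * rescaledIntegrand γ β δ u := by
  have hd : 0 < 1 - δ := by linarith
  rw [integrand, rescaledIntegrand,
    show 1 - ((1 - δ) * u + -1) ^ 2 = (1 - δ) * u * (2 - (1 - δ) * u) by ring,
    show 1 + δ * ((1 - δ) * u + -1) = (1 - δ) * (1 + δ * u) by ring,
    Real.mul_rpow (by positivity) (by linarith), Real.mul_rpow hd.le hu,
    Real.mul_rpow hd.le (by positivity), sub_eq_add_neg γ β, Real.rpow_add hd]
  ring

lemma rpow_mul_integral_integrand_neg_one_zero {δ : ℝ} (hδ0 : 0 ≤ δ) (hδ1 : δ < 1) :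
    (1 - δ) ^ (β - (γ + 1)) * ∫ ξ in (-1 : ℝ)..0, integrand γ β δ ξ
      = ∫ u in Ioc 0 (1 - δ)⁻¹, rescaledIntegrand γ β δ u := by
  have hd : 0 < 1 - δ := by linarith
  have hsubst := intervalIntegral.smul_integral_comp_mul_add (a := 0) (b := (1 - δ)⁻¹)
    (integrand γ β δ) (1 - δ) (-1)
  rw [mul_zero, zero_add, mul_inv_cancel₀ hd.ne', add_neg_cancel, smul_eq_mul] at hsubst
  have hcongr : ∫ u in (0 : ℝ)..(1 - δ)⁻¹, integrand γ β δ ((1 - δ) * u + -1)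
      = ∫ u in (0 : ℝ)..(1 - δ)⁻¹, (1 - δ) ^ (γ - β) * rescaledIntegrand γ β δ u := by
    refine intervalIntegral.integral_congr fun u hu => ?_
    rw [uIcc_of_le (by positivity)] at hu
    have : (1 - δ) * u ≤ 1 := by
      simpa [hd.ne'] using mul_le_mul_of_nonneg_left hu.2 hd.le
    exact integrand_mul_add_neg_one hδ0 hδ1 hu.1 (by linarith)
  rw [← hsubst, hcongr, intervalIntegral.integral_const_mul,
    intervalIntegral.integral_of_le (by positivity), ← mul_assoc, ← mul_assoc,
    ← Real.rpow_add_one hd.ne', ← Real.rpow_add hd,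
    show β - (γ + 1) + 1 + (γ - β) = 0 by ring, Real.rpow_zero, one_mul]

lemma integrableOn_rpow_mul_one_add_rpow_neg (hγ : -1 < γ) (hβ : γ + 1 < β) :
    IntegrableOn (fun u : ℝ => u ^ γ * (1 + u) ^ (-β)) (Ioi 0) := by
  have hmeas : AEStronglyMeasurable (fun u : ℝ => u ^ γ * (1 + u) ^ (-β)) :=
    (by fun_prop : Measurable _).aestronglyMeasurable
  have hnear : IntegrableOn (fun u : ℝ => u ^ γ * (1 + u) ^ (-β)) (Ioc 0 1) := by
    refine (intervalIntegral.intervalIntegrable_rpow' hγ (a := 0) (b := 1)).1.mono'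
      hmeas.restrict ?_
    filter_upwards [ae_restrict_mem measurableSet_Ioc] with u hu
    replace hu : 0 < u := hu.1
    have hpow := Real.rpow_nonneg hu.le γ
    rw [Real.norm_of_nonneg (mul_nonneg hpow (Real.rpow_nonneg (by linarith) _))]
    exact mul_le_of_le_one_right hpow
      (Real.rpow_le_one_of_one_le_of_nonpos (by linarith) (by linarith))
  have hfar : IntegrableOn (fun u : ℝ => u ^ γ * (1 + u) ^ (-β)) (Ioi 1) := by
    refine (integrableOn_Ioi_rpow_of_lt (a := γ - β) (by linarith) one_pos).mono'
      hmeas.restrict ?_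
    filter_upwards [ae_restrict_mem measurableSet_Ioi] with u hu
    replace hu : 1 < u := hu
    have hpow := Real.rpow_nonneg (zero_le_one.trans hu.le) γ
    rw [Real.norm_of_nonneg (mul_nonneg hpow (Real.rpow_nonneg (by linarith) _)),
      sub_eq_add_neg, Real.rpow_add (by linarith)]
    exact mul_le_mul_of_nonneg_left
      (Real.rpow_le_rpow_of_nonpos (by linarith) (by linarith) (by linarith)) hpow
  rw [← Ioc_union_Ioi_eq_Ioi zero_le_one]
  exact hnear.union hfar

lemma integral_rpow_mul_one_add_rpow_neg_pos (hγ : -1 < γ) (hβ : γ + 1 < β) :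
    0 < ∫ u in Ioi (0 : ℝ), u ^ γ * (1 + u) ^ (-β) := by
  have hpos : ∀ u ∈ Ioi (0 : ℝ), 0 < u ^ γ * (1 + u) ^ (-β) := fun u (hu : 0 < u) => by
    have := Real.rpow_pos_of_pos hu γ
    have := Real.rpow_pos_of_pos (show 0 < 1 + u by linarith) (-β)
    positivity
  rw [setIntegral_pos_iff_support_of_nonneg_ae
    ((ae_restrict_mem measurableSet_Ioi).mono fun u hu => (hpos u hu).le)
    (integrableOn_rpow_mul_one_add_rpow_neg hγ hβ),
    inter_eq_right.mpr fun u hu => Function.mem_support.mpr (hpos u hu).ne', Real.volume_Ioi]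
  exact ENNReal.zero_lt_top

lemma norm_rescaledIntegrand_le (hβ : 0 ≤ β) {δ u : ℝ} (hδ0 : 1 / 2 ≤ δ) (hδ1 : δ ≤ 1)
    (hu : 0 < u) (hu1 : (1 - δ) * u ≤ 1) :
    ‖rescaledIntegrand γ β δ u‖ ≤ 2 ^ |γ| * 2 ^ β * (u ^ γ * (1 + u) ^ (-β)) := by
  have hdu : 0 ≤ (1 - δ) * u := mul_nonneg (by linarith) hu.le
  have h1 := Real.rpow_nonneg hu.le γ
  have h2 := Real.rpow_nonneg (show 0 ≤ 2 - (1 - δ) * u by linarith) γ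
  have h3 := Real.rpow_nonneg (show 0 ≤ 1 + δ * u by nlinarith) (-β)
  have hmid : (2 - (1 - δ) * u) ^ γ ≤ 2 ^ |γ| := rpow_le_two_rpow_abs γ (by linarith) (by linarith)
  have hlast : (1 + δ * u) ^ (-β) ≤ 2 ^ β * (1 + u) ^ (-β) := calc
    (1 + δ * u) ^ (-β) ≤ ((1 + u) / 2) ^ (-β) :=
      Real.rpow_le_rpow_of_nonpos (by linarith) (by nlinarith) (by linarith)
    _ = 2 ^ β * (1 + u) ^ (-β) := by
      rw [Real.div_rpow (by linarith) zero_le_two, Real.rpow_neg zero_le_two, div_inv_eq_mul,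
        mul_comm]
  rw [rescaledIntegrand, Real.norm_of_nonneg (by positivity)]
  calc u ^ γ * (2 - (1 - δ) * u) ^ γ * (1 + δ * u) ^ (-β)
      ≤ u ^ γ * 2 ^ |γ| * (2 ^ β * (1 + u) ^ (-β)) := by gcongr
    _ = 2 ^ |γ| * 2 ^ β * (u ^ γ * (1 + u) ^ (-β)) := by ring

lemma tendsto_rescaledIntegrand {u : ℝ} (hu : 0 < u) :
    Tendsto (fun δ => rescaledIntegrand γ β δ u) (𝓝 1)
      (𝓝 (2 ^ γ * (u ^ γ * (1 + u) ^ (-β)))) := by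
  have hmid : Tendsto (fun δ : ℝ => 2 - (1 - δ) * u) (𝓝 1) (𝓝 2) :=
    (by fun_prop : Continuous fun δ : ℝ => 2 - (1 - δ) * u).tendsto' 1 2 (by ring)
  have hlast : Tendsto (fun δ : ℝ => 1 + δ * u) (𝓝 1) (𝓝 (1 + u)) :=
    (by fun_prop : Continuous fun δ : ℝ => 1 + δ * u).tendsto' 1 (1 + u) (by ring)
  convert (tendsto_const_nhds (x := u ^ γ)).mul
    ((hmid.rpow_const (.inl two_ne_zero)).mul (hlast.rpow_const (.inl (by positivity))))
    using 1
  · ext δ; rw [rescaledIntegrand, mul_assoc]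
  · congr 1; ring

lemma tendsto_setIntegral_rescaledIntegrand (hγ : -1 < γ) (hβ : γ + 1 < β) :
    Tendsto (fun δ => ∫ u in Ioc 0 (1 - δ)⁻¹, rescaledIntegrand γ β δ u) (𝓝[<] 1)
      (𝓝 (2 ^ γ * ∫ u in Ioi (0 : ℝ), u ^ γ * (1 + u) ^ (-β))) := by
  have hindicator : ∀ δ : ℝ, ∫ u in Ioc 0 (1 - δ)⁻¹, rescaledIntegrand γ β δ u
      = ∫ u in Ioi 0, (Ioc 0 (1 - δ)⁻¹).indicator (rescaledIntegrand γ β δ) u := fun δ => by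
    rw [setIntegral_indicator measurableSet_Ioc, inter_eq_right.mpr Ioc_subset_Ioi_self]
  simp_rw [hindicator, ← integral_const_mul]
  refine tendsto_integral_filter_of_dominated_convergence _
    (Eventually.of_forall fun δ => (((by unfold rescaledIntegrand; fun_prop :
      Measurable (rescaledIntegrand γ β δ)).indicator measurableSet_Ioc).aestronglyMeasurable))
    ?_ ((integrableOn_rpow_mul_one_add_rpow_neg hγ hβ).const_mul (2 ^ |γ| * 2 ^ β)) ?_
  · filter_upwards [Ioo_mem_nhdsLT (show (1 / 2 : ℝ) < 1 by norm_num)] with δ ⟨hδ0, hδ1⟩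
    filter_upwards [ae_restrict_mem measurableSet_Ioi] with u (hu : 0 < u)
    by_cases hmem : u ∈ Ioc 0 (1 - δ)⁻¹
    · rw [indicator_of_mem hmem]
      refine norm_rescaledIntegrand_le (by linarith) hδ0.le hδ1.le hu ?_
      simpa [(sub_pos.mpr hδ1).ne'] using mul_le_mul_of_nonneg_left hmem.2 (sub_pos.mpr hδ1).le
    · rw [indicator_of_notMem hmem, norm_zero]
      have := Real.rpow_nonneg hu.le γ
      have := Real.rpow_nonneg (show 0 ≤ 1 + u by linarith) (-β)
      positivity
  · filter_upwards [ae_restrict_mem measurableSet_Ioi] with u (hu : 0 < u)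
    refine ((tendsto_rescaledIntegrand hu).mono_left nhdsWithin_le_nhds).congr' ?_
    filter_upwards [Ioo_mem_nhdsLT (show 1 - u⁻¹ < 1 by simp [hu])] with δ ⟨hδ0, hδ1⟩
    have hmem : u ∈ Ioc 0 (1 - δ)⁻¹ :=
      ⟨hu, by rw [le_inv_comm₀ hu (sub_pos.mpr hδ1)]; linarith⟩
    exact (indicator_of_mem hmem _).symm

lemma tendsto_rpow_mul_integral_integrand_zero_one (hγ : -1 < γ) (hβ : γ + 1 < β) :
    Tendsto (fun δ => (1 - δ) ^ (β - (γ + 1)) * ∫ ξ in (0 : ℝ)..1, integrand γ β δ ξ) (𝓝[<] 1)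
      (𝓝 0) := by
  set C := ∫ ξ in (0 : ℝ)..1, (1 - ξ ^ 2) ^ γ
  have hvanish : Tendsto (fun δ : ℝ => (1 - δ) ^ (β - (γ + 1)) * C) (𝓝 1) (𝓝 0) := by
    have h := (((by fun_prop : Continuous fun δ : ℝ => 1 - δ).tendsto' 1 0 (by ring)).rpow_const
      (p := β - (γ + 1)) (.inr (by linarith))).mul_const C
    rwa [Real.zero_rpow (by linarith), zero_mul] at h
  refine squeeze_zero' ?_ ?_ (hvanish.mono_left nhdsWithin_le_nhds)
  all_goals
    filter_upwards [Ioo_mem_nhdsLT zero_lt_one] with δ ⟨hδ0, hδ1⟩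
    have hδ : |δ| < 1 := abs_lt.mpr ⟨by linarith, hδ1⟩
    have hpow := Real.rpow_nonneg (sub_pos.mpr hδ1).le (β - (γ + 1))
    have hsub : uIcc (0 : ℝ) 1 ⊆ uIcc (-1) 1 := uIcc_subset_uIcc (by simp) (by simp)
  · exact mul_nonneg hpow (intervalIntegral.integral_nonneg zero_le_one
      fun ξ hξ => integrand_nonneg hδ.le ⟨by linarith [hξ.1], hξ.2⟩)
  · exact mul_le_mul_of_nonneg_left (intervalIntegral.integral_mono_on zero_le_one
      ((intervalIntegrable_integrand hγ (by linarith) hδ).mono_set hsub)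
      ((intervalIntegrable_one_sub_sq_rpow hγ).mono_set hsub)
      fun ξ hξ => integrand_le_of_nonneg (by linarith) hδ0.le hξ) hpow

lemma tendsto_integral_integrand_mul_rpow (hγ : -1 < γ) (hβ : γ + 1 < β) :
    Tendsto (fun δ => (∫ ξ in (-1 : ℝ)..1, integrand γ β δ ξ) * (1 - δ) ^ (β - (γ + 1)))
      (𝓝[<] 1) (𝓝 (2 ^ γ * ∫ u in Ioi (0 : ℝ), u ^ γ * (1 + u) ^ (-β))) := by
  have hsum := (tendsto_setIntegral_rescaledIntegrand hγ hβ).add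
    (tendsto_rpow_mul_integral_integrand_zero_one hγ hβ)
  rw [add_zero] at hsum
  refine hsum.congr' ?_
  filter_upwards [Ioo_mem_nhdsLT zero_lt_one] with δ ⟨hδ0, hδ1⟩
  have hint :=
    intervalIntegrable_integrand (β := β) hγ (by linarith) (abs_lt.mpr ⟨by linarith, hδ1⟩)
  rw [← intervalIntegral.integral_add_adjacent_intervals (a := -1) (b := 0) (c := 1)
      (hint.mono_set (uIcc_subset_uIcc (by simp) (by simp)))
      (hint.mono_set (uIcc_subset_uIcc (by simp) (by simp))),
    ← rpow_mul_integral_integrand_neg_one_zero hδ0.le hδ1]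
  ring

end EndpointAsymptotics

open EndpointAsymptotics

theorem stmt_6 (γ β : ℝ) (hγ : -1 < γ) (hβ : γ + 1 - β < 0)
    (I : ℝ → ℝ)
    (hI : ∀ δ : ℝ, I δ = ∫ ξ in (-1 : ℝ)..1, (1 - ξ ^ 2) ^ γ * (1 + δ * ξ) ^ (-β)) :
    ∃ K : ℝ, 0 < K ∧
      Filter.Tendsto (fun δ : ℝ => I δ * (1 - |δ|) ^ (β - (γ + 1)))
        (Filter.comap (fun δ : ℝ => |δ|) (nhdsWithin 1 (Set.Iio 1))) (nhds K) := by
  have hβ' : γ + 1 < β := by linarith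
  have hI_even : ∀ δ, I |δ| = I δ := fun δ => by
    rcases abs_choice δ with h | h
    · rw [h]
    · rw [h, hI, hI]; exact integral_integrand_neg γ β δ
  refine ⟨2 ^ γ * ∫ u in Ioi (0 : ℝ), u ^ γ * (1 + u) ^ (-β),
    mul_pos (by positivity) (integral_rpow_mul_one_add_rpow_neg_pos hγ hβ'), ?_⟩
  refine ((tendsto_integral_integrand_mul_rpow hγ hβ').comp tendsto_comap).congr fun δ => ?_
  rw [Function.comp_apply, ← hI_even δ, hI]
  rfl
end

section
/- Let \gamma > -1 and \beta \in \mathbb{R} with \gamma+1-\beta>0, and let I(\delta) = \int_{-1}^{1} (1-\xi^2)^{\gamma}(1+\delta\xi)^{-\beta}\,d\xi for \delta\in(-1,1). Then I(\delta) converges to a finite positive limit K as |\delta|\to 1. -/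
/-!
For `|δ| ≤ 1` and `|ξ| < 1` we have `1 - |ξ| ≤ 1 + δξ ≤ 2` and
`1 - ξ² = (1 - |ξ|)(1 + |ξ|)`, so the integrand is dominated, uniformly in `δ ∈ [-1, 1]`, by a
combination of `(1 - |ξ|)^(γ - β)` and `(1 - |ξ|)^γ`, which are integrable because `γ - β > -1`
and `γ > -1`. Dominated convergence makes `I` continuous on the closed interval `[-1, 1]`, the
substitution `ξ ↦ -ξ` makes it even, hence `I δ → I 1` as `|δ| → 1`, and `I 1 > 0` because the
integrand is positive.
-/

open MeasureTheory Filter Set Real Topology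
open scoped Interval

theorem Real.rpow_le_max_of_mem_Icc {a b x : ℝ} (s : ℝ) (ha : 0 < a) (hx : x ∈ Icc a b) :
    x ^ s ≤ max (a ^ s) (b ^ s) := by
  rcases le_total 0 s with hs | hs
  · exact le_max_of_le_right (rpow_le_rpow (ha.le.trans hx.1) hx.2 hs)
  · exact le_max_of_le_left (rpow_le_rpow_of_nonpos ha hx.1 hs)

theorem intervalIntegrable_one_sub_abs_rpow {r : ℝ} (hr : -1 < r) :
    IntervalIntegrable (fun ξ : ℝ => (1 - |ξ|) ^ r) volume (-1) 1 := by
  have hright : IntervalIntegrable (fun ξ : ℝ => (1 - |ξ|) ^ r) volume 0 1 := by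
    have h :=
      ((intervalIntegral.intervalIntegrable_rpow' hr (a := 0) (b := 1)).comp_sub_left 1).symm
    norm_num at h
    refine h.congr fun ξ hξ => ?_
    rw [uIoc_of_le zero_le_one] at hξ
    simp only [abs_of_pos hξ.1]
  have hleft : IntervalIntegrable (fun ξ : ℝ => (1 - |ξ|) ^ r) volume (-1) 0 := by
    simpa using ((IntervalIntegrable.iff_comp_neg).mp hright).symm
  exact hleft.trans hright

section Jacobi

variable (γ β : ℝ)

noncomputable def jacobiIntegrand (δ ξ : ℝ) : ℝ :=
  (1 - ξ ^ 2) ^ γ * (1 + δ * ξ) ^ (-β)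

noncomputable def jacobiIntegral (δ : ℝ) : ℝ :=
  ∫ ξ in (-1 : ℝ)..1, jacobiIntegrand γ β δ ξ

noncomputable def jacobiMajorant (ξ : ℝ) : ℝ :=
  max 1 (2 ^ γ) * ((1 - |ξ|) ^ (γ - β) + 2 ^ (-β) * (1 - |ξ|) ^ γ)

theorem jacobiIntegral_neg (δ : ℝ) : jacobiIntegral γ β (-δ) = jacobiIntegral γ β δ := by
  have h := intervalIntegral.integral_comp_neg (a := -1) (b := 1) (jacobiIntegrand γ β δ)
  simpa [jacobiIntegral, jacobiIntegrand] using h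

theorem jacobiIntegral_abs (δ : ℝ) : jacobiIntegral γ β |δ| = jacobiIntegral γ β δ := by
  rcases abs_choice δ with h | h <;> simp only [h, jacobiIntegral_neg]

variable {γ β}

theorem measurable_jacobiIntegrand (δ : ℝ) : Measurable (jacobiIntegrand γ β δ) := by
  unfold jacobiIntegrand; fun_prop

theorem one_add_mul_mem_Icc {δ ξ : ℝ} (hδ : |δ| ≤ 1) :
    1 + δ * ξ ∈ Icc (1 - |ξ|) (1 + |ξ|) := by
  have hδξ : |δ * ξ| ≤ |ξ| := by
    rw [abs_mul]; exact mul_le_of_le_one_left (abs_nonneg ξ) hδ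
  constructor <;> linarith [neg_abs_le (δ * ξ), le_abs_self (δ * ξ)]

theorem jacobiIntegrand_pos {δ ξ : ℝ} (hδ : |δ| ≤ 1) (hξ : |ξ| < 1) :
    0 < jacobiIntegrand γ β δ ξ := by
  have hweight : 0 < 1 - ξ ^ 2 := by nlinarith [sq_abs ξ, abs_nonneg ξ]
  have hshift : 0 < 1 + δ * ξ := by linarith [(one_add_mul_mem_Icc (ξ := ξ) hδ).1]
  unfold jacobiIntegrand; positivity

theorem jacobiIntegrand_le {δ ξ : ℝ} (hδ : |δ| ≤ 1) (hξ : |ξ| < 1) :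
    jacobiIntegrand γ β δ ξ ≤ jacobiMajorant γ β ξ := by
  have hu : 0 < 1 - |ξ| := by linarith
  have hshift : 1 + δ * ξ ∈ Icc (1 - |ξ|) 2 := by
    obtain ⟨hlo, hhi⟩ := one_add_mul_mem_Icc (ξ := ξ) hδ
    exact ⟨hlo, by linarith⟩
  have hweight : (1 - ξ ^ 2) ^ γ = (1 - |ξ|) ^ γ * (1 + |ξ|) ^ γ := by
    rw [← mul_rpow hu.le (by positivity), ← sq_abs ξ]; ring_nf
  have hγbound : (1 + |ξ|) ^ γ ≤ max 1 (2 ^ γ) := by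
    simpa using rpow_le_max_of_mem_Icc γ one_pos
      (⟨by linarith [abs_nonneg ξ], by linarith⟩ : 1 + |ξ| ∈ Icc (1 : ℝ) 2)
  have hβbound : (1 + δ * ξ) ^ (-β) ≤ (1 - |ξ|) ^ (-β) + 2 ^ (-β) :=
    (rpow_le_max_of_mem_Icc (-β) hu hshift).trans
      (max_le_add_of_nonneg (by positivity) (by positivity))
  calc jacobiIntegrand γ β δ ξ
      = (1 + |ξ|) ^ γ * ((1 - |ξ|) ^ γ * (1 + δ * ξ) ^ (-β)) := by
        rw [jacobiIntegrand, hweight]; ring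
    _ ≤ max 1 (2 ^ γ) * ((1 - |ξ|) ^ γ * ((1 - |ξ|) ^ (-β) + 2 ^ (-β))) := by
        gcongr
        exact mul_nonneg (rpow_nonneg hu.le _) (rpow_nonneg (hu.le.trans hshift.1) _)
    _ = jacobiMajorant γ β ξ := by
        rw [jacobiMajorant, mul_add, ← rpow_add hu, ← sub_eq_add_neg]; ring

theorem ae_abs_lt_one_of_mem_uIoc : ∀ᵐ ξ : ℝ, ξ ∈ Ι (-1 : ℝ) 1 → |ξ| < 1 := by
  filter_upwards [Ioo_ae_eq_Ioc (μ := volume) (a := (-1 : ℝ)) (b := 1)] with ξ hIoo hξ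
  rw [uIoc_of_le (by norm_num)] at hξ
  exact abs_lt.mpr (hIoo.mpr hξ)

theorem ae_norm_jacobiIntegrand_le {δ : ℝ} (hδ : |δ| ≤ 1) :
    ∀ᵐ ξ, ξ ∈ Ι (-1 : ℝ) 1 → ‖jacobiIntegrand γ β δ ξ‖ ≤ jacobiMajorant γ β ξ := by
  filter_upwards [ae_abs_lt_one_of_mem_uIoc] with ξ hξ hmem
  rw [norm_of_nonneg (jacobiIntegrand_pos hδ (hξ hmem)).le]
  exact jacobiIntegrand_le hδ (hξ hmem)

theorem intervalIntegrable_jacobiMajorant (hγ : -1 < γ) (hβ : 0 < γ + 1 - β) :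
    IntervalIntegrable (jacobiMajorant γ β) volume (-1) 1 :=
  ((intervalIntegrable_one_sub_abs_rpow (by linarith)).add
    ((intervalIntegrable_one_sub_abs_rpow hγ).const_mul _)).const_mul _

theorem intervalIntegrable_jacobiIntegrand (hγ : -1 < γ) (hβ : 0 < γ + 1 - β) {δ : ℝ}
    (hδ : |δ| ≤ 1) : IntervalIntegrable (jacobiIntegrand γ β δ) volume (-1) 1 :=
  (intervalIntegrable_jacobiMajorant hγ hβ).mono_fun'
    (measurable_jacobiIntegrand δ).aestronglyMeasurable
    ((ae_restrict_iff' measurableSet_uIoc).mpr (ae_norm_jacobiIntegrand_le hδ))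

theorem jacobiIntegral_pos (hγ : -1 < γ) (hβ : 0 < γ + 1 - β) {δ : ℝ} (hδ : |δ| ≤ 1) :
    0 < jacobiIntegral γ β δ :=
  intervalIntegral.intervalIntegral_pos_of_pos_on (intervalIntegrable_jacobiIntegrand hγ hβ hδ)
    (fun _ hξ => jacobiIntegrand_pos hδ (abs_lt.mpr hξ)) (by norm_num)

theorem continuousOn_jacobiIntegral (hγ : -1 < γ) (hβ : 0 < γ + 1 - β) :
    ContinuousOn (jacobiIntegral γ β) (Icc (-1) 1) := by
  intro δ₀ hδ₀
  refine intervalIntegral.continuousWithinAt_of_dominated_interval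
    (Eventually.of_forall fun δ => (measurable_jacobiIntegrand δ).aestronglyMeasurable)
    ?_ (intervalIntegrable_jacobiMajorant hγ hβ) ?_
  · filter_upwards [self_mem_nhdsWithin] with δ hδ
    exact ae_norm_jacobiIntegrand_le (abs_le.mpr hδ)
  · filter_upwards [ae_abs_lt_one_of_mem_uIoc] with ξ hξ hmem
    have hshift : 0 < 1 + δ₀ * ξ :=
      lt_of_lt_of_le (by linarith [hξ hmem]) (one_add_mul_mem_Icc (abs_le.mpr hδ₀)).1
    unfold jacobiIntegrand
    exact (continuousAt_const.mul ((continuousAt_const.add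
      (continuousAt_id.mul continuousAt_const)).rpow_const (Or.inl hshift.ne'))).continuousWithinAt

end Jacobi

theorem stmt_7 (γ β : ℝ) (hγ : -1 < γ) (hβ : 0 < γ + 1 - β)
    (I : ℝ → ℝ)
    (hI : ∀ δ : ℝ, I δ = ∫ ξ in (-1 : ℝ)..1, (1 - ξ ^ 2) ^ γ * (1 + δ * ξ) ^ (-β)) :
    ∃ K : ℝ, 0 < K ∧
      Filter.Tendsto I
        (Filter.comap (fun δ : ℝ => |δ|) (nhdsWithin 1 (Set.Iio 1))) (nhds K) := by
  have hI_eq : I = fun δ => jacobiIntegral γ β |δ| :=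
    funext fun δ => (hI δ).trans (jacobiIntegral_abs γ β δ).symm
  have hlim : Tendsto (jacobiIntegral γ β) (𝓝[<] 1) (𝓝 (jacobiIntegral γ β 1)) :=
    (continuousOn_jacobiIntegral hγ hβ 1 (by norm_num)).mono_of_mem_nhdsWithin
      (Icc_mem_nhdsLT (by norm_num))
  rw [hI_eq]
  exact ⟨_, jacobiIntegral_pos hγ hβ (by norm_num : |(1 : ℝ)| ≤ 1), hlim.comp tendsto_comap⟩
end

section
/- For every d\in(-1,1), \int_{\mathcal{E}(d)} \kappa(d e_1,Y)^{p+1}\rho(Y)\,dY = \kappa_0^{p+1}\int_{|y|<1/2}\rho(y)\,dy, where \mathcal{E}(d)\subset B(0,1)\subset\mathbb{R}^2 is the ellipse centered at (-3d/(4-d^2),0) with horizontal semi-axis a(d)=2(1-d^2)/(4-d^2) and vertical semi-axis b(d)=\sqrt{(1-d^2)/(4-d^2)}. -/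
/-!
The map `y ↦ ((y₀ - d) / (1 - d y₀), √(1 - d²) y₁ / (1 - d y₀))`, the inverse of the paper's
change of variables (which is the same map with `-d` in place of `d`), sends the ball `|y| < 1/2` bijectively onto
`𝓔(d)`, with Jacobian `(1 - d²)^{3/2} / (1 - d y₀)³`. Along it `1 + d Y₀ = (1 - d²) / (1 - d y₀)` and
`1 - |Y|² = (1 - d²) (1 - |y|²) / (1 - d y₀)²`, and for `α = (5 - p) / (2 (p - 1))` the powers of
`1 - d²` and `1 - d y₀` cancel, so the change of variables formula turns the integrand into
`κ₀^{p+1} ρ(y)`.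
-/

open MeasureTheory

local notation "ℝ²" => EuclideanSpace ℝ (Fin 2)

theorem Matrix.det_toEuclideanCLM {n : Type*} [Fintype n] [DecidableEq n]
    (A : Matrix n n ℝ) : (Matrix.toEuclideanCLM (𝕜 := ℝ) A).det = A.det := by
  rw [ContinuousLinearMap.det, Matrix.coe_toEuclideanCLM_eq_toEuclideanLin,
    Matrix.toEuclideanLin_eq_toLin_orthonormal, LinearMap.det_toLin]

theorem EuclideanSpace.norm_sq_fin_two (y : ℝ²) : ‖y‖ ^ 2 = y 0 ^ 2 + y 1 ^ 2 := by
  simp [EuclideanSpace.real_norm_sq_eq, Fin.sum_univ_two]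

theorem one_sub_mul_apply_zero_pos {d : ℝ} (hd : d ^ 2 < 1) {y : ℝ²} (hy : ‖y‖ < 1) :
    0 < 1 - d * y 0 := by
  have hy0 : y 0 ^ 2 < 1 := by nlinarith [EuclideanSpace.norm_sq_fin_two y, norm_nonneg y]
  nlinarith [sq_nonneg (d - y 0), sq_nonneg (d + y 0)]

theorem ellipse_lt_one_iff {d : ℝ} (hd : d ^ 2 < 1) (Y₀ Y₁ : ℝ) :
    ((Y₀ - (-(3 * d) / (4 - d ^ 2))) / (2 * (1 - d ^ 2) / (4 - d ^ 2))) ^ 2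
        + (Y₁ / √((1 - d ^ 2) / (4 - d ^ 2))) ^ 2 < 1 ↔
      4 * ((Y₀ + d) ^ 2 + (1 - d ^ 2) * Y₁ ^ 2) < (1 + d * Y₀) ^ 2 := by
  have hv : 0 < 1 - d ^ 2 := by linarith
  have hu : 0 < 4 - d ^ 2 := by linarith
  have key : ((Y₀ - (-(3 * d) / (4 - d ^ 2))) / (2 * (1 - d ^ 2) / (4 - d ^ 2))) ^ 2
        + (Y₁ / √((1 - d ^ 2) / (4 - d ^ 2))) ^ 2 - 1 =
      (4 - d ^ 2) * (4 * ((Y₀ + d) ^ 2 + (1 - d ^ 2) * Y₁ ^ 2) - (1 + d * Y₀) ^ 2) /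
        (4 * (1 - d ^ 2) ^ 2) := by
    rw [div_pow Y₁, Real.sq_sqrt (by positivity)]
    field_simp
    ring
  rw [← sub_neg, key, div_lt_iff₀ (by positivity), zero_mul, ← mul_zero (4 - d ^ 2),
    mul_lt_mul_iff_right₀ hu, sub_neg]

section

variable {d s : ℝ} {y : ℝ²}

noncomputable def lorentzMap (d s : ℝ) (y : ℝ²) : ℝ² :=
  !₂[(y 0 - d) / (1 - d * y 0), s * y 1 / (1 - d * y 0)]

@[simp] theorem lorentzMap_apply_zero (d s : ℝ) (y : ℝ²) :
    lorentzMap d s y 0 = (y 0 - d) / (1 - d * y 0) := rfl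

@[simp] theorem lorentzMap_apply_one (d s : ℝ) (y : ℝ²) :
    lorentzMap d s y 1 = s * y 1 / (1 - d * y 0) := rfl

noncomputable def lorentzJacobian (d s : ℝ) (y : ℝ²) : Matrix (Fin 2) (Fin 2) ℝ :=
  !![(1 - d ^ 2) / (1 - d * y 0) ^ 2, 0; d * s * y 1 / (1 - d * y 0) ^ 2, s / (1 - d * y 0)]

theorem hasFDerivAt_lorentzMap (h : 1 - d * y 0 ≠ 0) :
    HasFDerivAt (lorentzMap d s) (Matrix.toEuclideanCLM (𝕜 := ℝ) (lorentzJacobian d s y)) y := by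
  have hproj (i : Fin 2) := (PiLp.hasStrictFDerivAt_apply (𝕜 := ℝ) 2 y i).hasFDerivAt
  have hden : HasDerivAt (fun t : ℝ ↦ 1 - d * t) (-d) (y 0) := by
    simpa using ((hasDerivAt_id (y 0)).const_mul d).const_sub 1
  rw [← hasFDerivWithinAt_univ, hasFDerivWithinAt_euclidean]
  intro i
  rw [hasFDerivWithinAt_univ]
  fin_cases i
  · refine ((((hasDerivAt_id (y 0)).sub_const d).div hden h).comp_hasFDerivAt y
      (hproj 0)).congr_fderiv ?_
    ext v
    simp only [Fin.zero_eta, lorentzJacobian, ContinuousLinearMap.comp_apply,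
      smul_apply, PiLp.proj_apply, Matrix.ofLp_toEuclideanCLM,
      Matrix.mulVec, dotProduct, Fin.sum_univ_two, Matrix.of_apply, Matrix.cons_val',
      Matrix.cons_val_fin_one, Matrix.cons_val_zero, Matrix.cons_val_one, id_eq, smul_eq_mul]
    ring
  · refine (((hproj 1).const_mul s).mul ((hden.inv h).comp_hasFDerivAt y
      (hproj 0))).congr_fderiv ?_
    ext v
    simp only [Fin.mk_one, lorentzJacobian, ContinuousLinearMap.comp_apply,
      add_apply, smul_apply, PiLp.proj_apply,
      Matrix.ofLp_toEuclideanCLM, Matrix.mulVec, dotProduct, Fin.sum_univ_two, Matrix.of_apply,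
      Matrix.cons_val', Matrix.cons_val_fin_one, Matrix.cons_val_zero, Matrix.cons_val_one,
      Function.comp_apply, Pi.inv_apply, smul_eq_mul]
    ring

theorem det_lorentzJacobian (h : 1 - d * y 0 ≠ 0) :
    (lorentzJacobian d s y).det = (1 - d ^ 2) * s / (1 - d * y 0) ^ 3 := by
  rw [lorentzJacobian, Matrix.det_fin_two_of]
  field_simp
  ring

theorem norm_sq_lorentzMap (d s : ℝ) (y : ℝ²) :
    ‖lorentzMap d s y‖ ^ 2 = ((y 0 - d) ^ 2 + s ^ 2 * y 1 ^ 2) / (1 - d * y 0) ^ 2 := by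
  rw [EuclideanSpace.norm_sq_fin_two, lorentzMap_apply_zero, lorentzMap_apply_one, div_pow,
    div_pow, mul_pow, ← add_div]

theorem one_sub_norm_sq_lorentzMap (hs : s ^ 2 = 1 - d ^ 2) (h : 1 - d * y 0 ≠ 0) :
    1 - ‖lorentzMap d s y‖ ^ 2 = (1 - d ^ 2) * (1 - ‖y‖ ^ 2) / (1 - d * y 0) ^ 2 := by
  rw [norm_sq_lorentzMap, EuclideanSpace.norm_sq_fin_two, hs, one_sub_div (pow_ne_zero 2 h)]
  ring

theorem norm_lorentzMap_lt_half_iff (h : 1 - d * y 0 ≠ 0) :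
    ‖lorentzMap d s y‖ < 1 / 2 ↔ 4 * ((y 0 - d) ^ 2 + s ^ 2 * y 1 ^ 2) < (1 - d * y 0) ^ 2 := by
  rw [← sq_lt_sq₀ (norm_nonneg _) (by norm_num), norm_sq_lorentzMap,
    div_lt_iff₀ (by positivity)]
  constructor <;> intro hlt <;> linarith

theorem one_add_mul_lorentzMap (h : 1 - d * y 0 ≠ 0) :
    1 + d * lorentzMap d s y 0 = (1 - d ^ 2) / (1 - d * y 0) := by
  rw [lorentzMap_apply_zero, mul_div_assoc', add_div' _ _ _ h]
  ring_nf

theorem lorentzMap_neg_lorentzMap (hs : s ^ 2 = 1 - d ^ 2) (hd : d ^ 2 ≠ 1)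
    (h : 1 - d * y 0 ≠ 0) : lorentzMap (-d) s (lorentzMap d s y) = y := by
  have hd' : 1 - d ^ 2 ≠ 0 := sub_ne_zero.2 (Ne.symm hd)
  have hden : 1 - -d * lorentzMap d s y 0 = (1 - d ^ 2) / (1 - d * y 0) := by
    rw [neg_mul, sub_neg_eq_add, one_add_mul_lorentzMap h]
  ext i
  fin_cases i
  · rw [Fin.zero_eta, lorentzMap_apply_zero (-d), hden, lorentzMap_apply_zero, sub_neg_eq_add,
      div_add' _ _ _ h, div_div_div_cancel_right₀ h, div_eq_iff hd']
    ring
  · rw [Fin.mk_one, lorentzMap_apply_one (-d), hden, lorentzMap_apply_one, mul_div_assoc',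
      div_div_div_cancel_right₀ h, ← mul_assoc, ← sq, hs, mul_div_cancel_left₀ _ hd']

theorem lorentzMap_lorentzMap_neg (hs : s ^ 2 = 1 - d ^ 2) (hd : d ^ 2 ≠ 1) {Y : ℝ²}
    (h : 1 + d * Y 0 ≠ 0) : lorentzMap d s (lorentzMap (-d) s Y) = Y := by
  simpa using lorentzMap_neg_lorentzMap (d := -d) (by simpa using hs) (by simpa using hd)
    (by simpa using h)

theorem injOn_lorentzMap (hs : s ^ 2 = 1 - d ^ 2) (hd : d ^ 2 ≠ 1) :
    Set.InjOn (lorentzMap d s) {y | 1 - d * y 0 ≠ 0} :=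
  Set.LeftInvOn.injOn (f₁' := lorentzMap (-d) s) fun _ hy ↦ lorentzMap_neg_lorentzMap hs hd hy

theorem lorentzMap_image (hs : s ^ 2 = 1 - d ^ 2) (hd : d ^ 2 ≠ 1) {S : Set ℝ²}
    (hS : ∀ y ∈ S, 1 - d * y 0 ≠ 0) :
    lorentzMap d s '' S = {Y | 1 + d * Y 0 ≠ 0} ∩ lorentzMap (-d) s ⁻¹' S := by
  have hd' : 1 - d ^ 2 ≠ 0 := sub_ne_zero.2 (Ne.symm hd)
  ext Y
  constructor
  · rintro ⟨y, hy, rfl⟩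
    refine ⟨(one_add_mul_lorentzMap (hS y hy)).trans_ne (div_ne_zero hd' (hS y hy)), ?_⟩
    rwa [Set.mem_preimage, lorentzMap_neg_lorentzMap hs hd (hS y hy)]
  · rintro ⟨hY, hgY⟩
    exact ⟨_, hgY, lorentzMap_lorentzMap_neg hs hd hY⟩

theorem lorentzMap_image_ball (hd : d ^ 2 < 1) :
    lorentzMap d √(1 - d ^ 2) '' Metric.ball 0 (1 / 2) = {Y : ℝ² |
      ((Y 0 - (-(3 * d) / (4 - d ^ 2))) / (2 * (1 - d ^ 2) / (4 - d ^ 2))) ^ 2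
        + (Y 1 / √((1 - d ^ 2) / (4 - d ^ 2))) ^ 2 < 1} := by
  have hs : √(1 - d ^ 2) ^ 2 = 1 - d ^ 2 := Real.sq_sqrt (by linarith)
  rw [lorentzMap_image hs hd.ne fun y hy ↦
    (one_sub_mul_apply_zero_pos hd ((mem_ball_zero_iff.1 hy).trans (by norm_num))).ne']
  ext Y
  simp only [Set.mem_inter_iff, Set.mem_preimage, mem_ball_zero_iff, Set.mem_ofPred_eq,
    ellipse_lt_one_iff hd]
  have hiff (hY : 1 + d * Y 0 ≠ 0) := norm_lorentzMap_lt_half_iff (s := √(1 - d ^ 2))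
    (by rwa [neg_mul, sub_neg_eq_add] : 1 - -d * Y 0 ≠ 0)
  simp only [sub_neg_eq_add, neg_mul, hs] at hiff
  constructor
  · rintro ⟨hY, hlt⟩
    linarith [(hiff hY).1 hlt]
  · intro hQ
    have hY : 1 + d * Y 0 ≠ 0 := fun h0 ↦ by
      rw [h0] at hQ
      nlinarith [sq_nonneg (Y 0 + d), sq_nonneg (Y 1)]
    exact ⟨hY, (hiff hY).2 (by linarith)⟩

end

theorem jacobian_mul_integrand_eq {p v e m κ : ℝ} (hp : p ≠ 1) (hv : 0 < v) (he : 0 < e)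
    (hm : 0 < m) (hκ : 0 < κ) :
    v * √v / e ^ 3 * ((κ * v ^ (1 / (p - 1)) / (v / e) ^ (2 / (p - 1))) ^ (p + 1) *
      (v * m / e ^ 2) ^ ((5 - p) / (2 * (p - 1)))) = κ ^ (p + 1) * m ^ ((5 - p) / (2 * (p - 1))) := by
  have hp' : p - 1 ≠ 0 := sub_ne_zero.2 hp
  refine Real.log_injOn_pos (Set.mem_Ioi.2 (by positivity)) (Set.mem_Ioi.2 (by positivity)) ?_
  have hve : 0 < v / e := by positivity
  rw [Real.log_mul (by positivity) (by positivity), Real.log_mul (by positivity) (by positivity),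
    Real.log_mul (by positivity) (by positivity), Real.log_div (by positivity) (by positivity),
    Real.log_mul (by positivity) (by positivity), Real.log_sqrt hv.le, Real.log_pow,
    Real.log_rpow (by positivity), Real.log_rpow (by positivity), Real.log_rpow (by positivity),
    Real.log_rpow (by positivity), Real.log_div (by positivity) (by positivity),
    Real.log_mul (by positivity) (by positivity), Real.log_rpow hv, Real.log_rpow hve,
    Real.log_div hv.ne' he.ne', Real.log_div (by positivity) (by positivity),
    Real.log_mul hv.ne' hm.ne', Real.log_pow]
  field_simp
  ring

theorem stmt_8_general (p : ℝ) (hp1 : 1 < p)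
    (α κ₀ : ℝ) (hα : α = (5 - p) / (2 * (p - 1)))
    (hκ₀ : κ₀ = (2 * (p + 1) / (p - 1) ^ 2) ^ (1 / (p - 1)))
    (ρ : EuclideanSpace ℝ (Fin 2) → ℝ)
    (hρ : ∀ y, ρ y = (1 - ‖y‖ ^ 2) ^ α) :
    ∀ d : ℝ, d ∈ Set.Ioo (-1 : ℝ) 1 →
      (∫ Y in {Y : EuclideanSpace ℝ (Fin 2) |
          ((Y 0 - (-(3 * d) / (4 - d ^ 2))) / (2 * (1 - d ^ 2) / (4 - d ^ 2))) ^ 2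
            + (Y 1 / Real.sqrt ((1 - d ^ 2) / (4 - d ^ 2))) ^ 2 < 1},
          (κ₀ * (1 - d ^ 2) ^ (1 / (p - 1)) / (1 + d * Y 0) ^ (2 / (p - 1))) ^ (p + 1) * ρ Y)
        = κ₀ ^ (p + 1) *
            ∫ y in Metric.ball (0 : EuclideanSpace ℝ (Fin 2)) (1 / 2), ρ y := by
  rintro d ⟨hd₁, hd₂⟩
  have hd : d ^ 2 < 1 := by nlinarith
  have hv : 0 < 1 - d ^ 2 := by linarith
  have hs : √(1 - d ^ 2) ^ 2 = 1 - d ^ 2 := Real.sq_sqrt hv.le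
  have hκ : 0 < κ₀ := hκ₀ ▸ by positivity
  have he {y : ℝ²} (hy : y ∈ Metric.ball 0 (1 / 2)) : 0 < 1 - d * y 0 :=
    one_sub_mul_apply_zero_pos hd ((mem_ball_zero_iff.1 hy).trans (by norm_num))
  rw [← lorentzMap_image_ball hd, integral_image_eq_integral_abs_det_fderiv_smul volume
    measurableSet_ball (fun y hy ↦ (hasFDerivAt_lorentzMap (he hy).ne').hasFDerivWithinAt)
    ((injOn_lorentzMap hs hd.ne).mono fun y hy ↦ (he hy).ne'), ← integral_const_mul]
  refine setIntegral_congr_fun measurableSet_ball fun y hy ↦ ?_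
  have hy₀ := he hy
  have hm : 0 < 1 - ‖y‖ ^ 2 := by nlinarith [mem_ball_zero_iff.1 hy, norm_nonneg y]
  rw [smul_eq_mul, Matrix.det_toEuclideanCLM, det_lorentzJacobian hy₀.ne',
    one_add_mul_lorentzMap hy₀.ne', hρ, hρ, one_sub_norm_sq_lorentzMap hs hy₀.ne',
    abs_of_pos (by have := he hy; positivity), hα]
  exact jacobian_mul_integrand_eq hp1.ne' hv hy₀ hm hκ

theorem stmt_8 (p : ℝ) (hp1 : 1 < p) (hp2 : p < 5)
    (α κ₀ : ℝ) (hα : α = (5 - p) / (2 * (p - 1)))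
    (hκ₀ : κ₀ = (2 * (p + 1) / (p - 1) ^ 2) ^ (1 / (p - 1)))
    (ρ : EuclideanSpace ℝ (Fin 2) → ℝ)
    (hρ : ∀ y, ρ y = (1 - ‖y‖ ^ 2) ^ α) :
    ∀ d : ℝ, d ∈ Set.Ioo (-1 : ℝ) 1 →
      (∫ Y in {Y : EuclideanSpace ℝ (Fin 2) |
          ((Y 0 - (-(3 * d) / (4 - d ^ 2))) / (2 * (1 - d ^ 2) / (4 - d ^ 2))) ^ 2
            + (Y 1 / Real.sqrt ((1 - d ^ 2) / (4 - d ^ 2))) ^ 2 < 1},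
          (κ₀ * (1 - d ^ 2) ^ (1 / (p - 1)) / (1 + d * Y 0) ^ (2 / (p - 1))) ^ (p + 1) * ρ Y)
        = κ₀ ^ (p + 1) *
            ∫ y in Metric.ball (0 : EuclideanSpace ℝ (Fin 2)) (1 / 2), ρ y :=
  stmt_8_general p hp1 α κ₀ hα hκ₀ ρ hρ
end

section
/- Let p\in(1,2). Define g(z) = (1+\sqrt z)^{2/(p-1)} + (1-\sqrt z)^{2/(p-1)} and h(z) = (1-z)^{2/(p-1)} for z\in[0,1), and K^*(z_1,z_2) = g(z_2)h(z_1) - g(z_1)h(z_2). Then there exists \beta_0>0 such that for all z\in[0,99/100], -2g(z)h'(z)+2g'(z)h(z) \ge 2\beta_0; equivalently the directional derivative of K^* at (z,z) in the direction (-1,1) is bounded below by 2\beta_0. -/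
/-!
With `a = 2/(p-1) ≥ 1` we have `h'(z) = -a(1-z)^(a-1)`. The function
`s ↦ (1+s)^a + (1-s)^a` is nondecreasing on `[0,1]`, so `g` is nondecreasing on `(-∞,1]`
(where `√z` ranges in `[0,1]`); hence `g' ≥ 0` and `g ≥ g 0 = 2` there. Therefore
`-2 g h' + 2 g' h ≥ 4a(1-z)^(a-1) ≥ 4a(1/100)^(a-1)` on `[0, 99/100]`.
-/

open Set

lemma hasDerivAt_one_sub_rpow (a : ℝ) {z : ℝ} (hz : z < 1) :
    HasDerivAt (fun z : ℝ => (1 - z) ^ a) (-(a * (1 - z) ^ (a - 1))) z :=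
  (((hasDerivAt_id' z).const_sub 1).rpow_const (Or.inl (sub_ne_zero.mpr hz.ne'))).congr_deriv
    (by ring)

lemma monotoneOn_one_add_rpow_add_one_sub_rpow {a : ℝ} (ha : 1 ≤ a) :
    MonotoneOn (fun s : ℝ => (1 + s) ^ a + (1 - s) ^ a) (Icc 0 1) := by
  have hderiv : ∀ s < 1, HasDerivAt (fun s : ℝ => (1 + s) ^ a + (1 - s) ^ a)
      (a * (1 + s) ^ (a - 1) - a * (1 - s) ^ (a - 1)) s := by
    intro s hs
    have hplus := ((hasDerivAt_id' s).const_add 1).rpow_const (p := a) (Or.inr ha)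
    exact (hplus.add (hasDerivAt_one_sub_rpow a hs)).congr_deriv (by ring)
  have hcont : Continuous fun s : ℝ => (1 + s) ^ a + (1 - s) ^ a := by
    have := Real.continuous_rpow_const (q := a) (by linarith)
    fun_prop
  refine monotoneOn_of_deriv_nonneg (convex_Icc 0 1) hcont.continuousOn
    (fun s hs => (hderiv s (by simp_all)).differentiableAt.differentiableWithinAt)
    (fun s hs => ?_)
  rw [interior_Icc] at hs
  rw [(hderiv s hs.2).deriv, sub_nonneg]
  gcongr <;> linarith [hs.1, hs.2]

lemma monotoneOn_one_add_sqrt_rpow_add_one_sub_sqrt_rpow {a : ℝ} (ha : 1 ≤ a) :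
    MonotoneOn (fun z : ℝ => (1 + √z) ^ a + (1 - √z) ^ a) (Iic 1) :=
  (monotoneOn_one_add_rpow_add_one_sub_rpow ha).comp (fun _ _ _ _ h => Real.sqrt_le_sqrt h)
    fun _ hz => ⟨Real.sqrt_nonneg _, Real.sqrt_le_one.mpr hz⟩

theorem stmt_10 (p : ℝ) (hp1 : 1 < p) (hp2 : p < 2)
    (g hfun : ℝ → ℝ)
    (hg : ∀ z : ℝ, g z = (1 + Real.sqrt z) ^ (2 / (p - 1)) + (1 - Real.sqrt z) ^ (2 / (p - 1)))
    (hh : ∀ z : ℝ, hfun z = (1 - z) ^ (2 / (p - 1))) :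
    ∃ β₀ : ℝ, 0 < β₀ ∧
      ∀ z ∈ Set.Icc (0 : ℝ) (99 / 100),
        2 * β₀ ≤ -2 * g z * deriv hfun z + 2 * deriv g z * hfun z := by
  set a := 2 / (p - 1)
  have ha : 1 ≤ a := by rw [le_div_iff₀ (by linarith)]; linarith
  have hmono : MonotoneOn g (Iic 1) := by
    simpa only [← funext hg] using monotoneOn_one_add_sqrt_rpow_add_one_sub_sqrt_rpow ha
  refine ⟨2 * a * (1 / 100) ^ (a - 1), by positivity, ?_⟩
  rintro z ⟨hz0, hz1⟩
  have hz : z ∈ Iic (1 : ℝ) := by simp only [mem_Iic]; linarith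
  have hg_ge : 2 ≤ g z := by
    have h0 : g 0 = 2 := by norm_num [hg]
    exact h0 ▸ hmono (by norm_num) hz hz0
  have hg' : 0 ≤ deriv g z := by
    rw [← derivWithin_of_mem_nhds (Iic_mem_nhds (by linarith : z < 1))]
    exact hmono.derivWithin_nonneg
  have hh' : deriv hfun z = -(a * (1 - z) ^ (a - 1)) := by
    rw [funext hh]; exact (hasDerivAt_one_sub_rpow a (by linarith)).deriv
  have hpow : (1 / 100 : ℝ) ^ (a - 1) ≤ (1 - z) ^ (a - 1) := by
    gcongr; linarith
  have hh_nonneg : 0 ≤ hfun z := hh z ▸ Real.rpow_nonneg (by linarith) a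
  rw [hh']
  nlinarith [mul_nonneg hg' hh_nonneg, mul_le_mul hg_ge hpow (by positivity) (by linarith),
    mul_le_mul_of_nonneg_left hpow (by linarith : (0:ℝ) ≤ a)]
end

section
/- Let p>1, |d|<1, \nu>-1+|d|, and \lambda = \lambda(|d|,\nu) = ((1-|d|^2)/((1+\nu)^2-|d|^2))^{1/(p-1)}. Define F(\lambda,\nu,d) = \frac{p+1}{p-1}\lambda^2 - \frac{2}{p-1}\lambda^{p+1} + \frac{2}{p-1}\frac{\nu^2}{1-|d|^2}\lambda^{p+1}. Then F \le 1, i.e. E(\kappa^*(d,\nu)) = E(\kappa_0,0)\,F \le E(\kappa_0,0) when E(\kappa_0,0)>0. In particular, for all \lambda\ge 0 and all \nu,d, \frac{p+1}{p-1}\lambda^2 - \frac{2}{p-1}\lambda^{p+1}(1 - \frac{\nu^2}{1-|d|^2}) \le 1 whenever \lambda^{p-1}(1+\nu/(1-|d|))(1+\nu/(1+|d|)) = 1. -/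
/-!
With `q = p - 1`, `D = (1 + ν)² - d²` and `L = lam ^ (q / 2)` (so `L² D = 1 - d²`), the claim
`F ≤ 1` is equivalent to `q D (lam² - 1) + 4 ν (1 + ν) lam² ≤ 0`. Bernoulli's inequality with
exponent `1 + q / 4` gives `q (lam² - 1) ≤ 4 lam² (L - 1)`, and `D L ≤ 1 + ν - d²` because
`(1 + ν - d²)² - D (1 - d²) = d² ν²`; together they yield the required bound.
-/

open Real

theorem mul_sq_sub_one_le_rpow (q lam : ℝ) (hq : 0 ≤ q) (hlam : 0 ≤ lam) :
    q * (lam ^ 2 - 1) ≤ 4 * lam ^ 2 * (lam ^ (q / 2) - 1) := by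
  have bernoulli := one_add_mul_self_le_rpow_one_add (s := lam ^ 2 - 1) (p := 1 + q / 4)
    (by nlinarith) (by linarith)
  have hpow : (1 + (lam ^ 2 - 1)) ^ (1 + q / 4) = lam ^ 2 * lam ^ (q / 2) := by
    rw [add_sub_cancel, ← rpow_natCast, ← rpow_mul hlam, ← rpow_add' hlam (by positivity)]
    congr 1
    push_cast
    ring
  rw [hpow] at bernoulli
  linarith

theorem mul_le_add_sub_sq_of_sq_mul_eq (d ν L : ℝ) (hdν : d ^ 2 ≤ 1 + ν)
    (hrel : L ^ 2 * ((1 + ν) ^ 2 - d ^ 2) = 1 - d ^ 2) :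
    ((1 + ν) ^ 2 - d ^ 2) * L ≤ 1 + ν - d ^ 2 := by
  refine (le_abs_self _).trans (abs_le_of_sq_le_sq ?_ (by linarith))
  linear_combination ((1 + ν) ^ 2 - d ^ 2) * hrel + sq_nonneg (d * ν)

theorem stmt_14 (p d ν lam : ℝ) (hp : 1 < p) (hd : d ∈ Set.Ioo (-1 : ℝ) 1)
    (hν : -1 + |d| < ν) (hlam : 0 < lam)
    (hrel : lam ^ (p - 1) = (1 - d ^ 2) / ((1 + ν) ^ 2 - d ^ 2)) :
    ((p + 1) / (p - 1)) * lam ^ 2 - (2 / (p - 1)) * lam ^ (p + 1)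
        + (2 / (p - 1)) * (ν ^ 2 / (1 - d ^ 2)) * lam ^ (p + 1) ≤ 1 := by
  have hd_abs : |d| < 1 := abs_lt.2 hd
  have hd_sq : d ^ 2 ≤ |d| := by nlinarith [sq_abs d, abs_nonneg d]
  have hq : 0 < p - 1 := by linarith
  have hD : 0 < (1 + ν) ^ 2 - d ^ 2 := by
    rw [sub_pos, ← sq_abs d]
    exact pow_lt_pow_left₀ (by linarith) (abs_nonneg d) two_ne_zero
  set L := lam ^ ((p - 1) / 2)
  have hL : L ^ 2 = lam ^ (p - 1) := by
    rw [← rpow_natCast, ← rpow_mul hlam.le]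
    norm_num
  have hsplit : lam ^ (p + 1) = lam ^ 2 * L ^ 2 := by
    rw [hL, ← rpow_natCast, ← rpow_add hlam]
    norm_num
    ring_nf
  have bernoulli := mul_sq_sub_one_le_rpow (p - 1) lam hq.le hlam.le
  have hDL := mul_le_add_sub_sq_of_sq_mul_eq d ν L (by linarith)
    (by rw [hL, hrel]; field_simp)
  have key : (p - 1) * ((1 + ν) ^ 2 - d ^ 2) * (lam ^ 2 - 1) + 4 * ν * (1 + ν) * lam ^ 2 ≤ 0 := by
    linear_combination ((1 + ν) ^ 2 - d ^ 2) * bernoulli + 4 * lam ^ 2 * hDL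
  have hd_ne : 1 - d ^ 2 ≠ 0 := by linarith
  rw [hsplit, hL, hrel]
  field_simp
  linear_combination key
end
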